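/- Main proposition: define SqOp A E I O := (A ↔ ¬O) ∧ (E ↔ ¬I) ∧ ¬(A ∧ E) ∧ (I ∨ O) ∧ (A → I) ∧ (E → O). If P is bivalent with respect to S (i.e. P (ε S) → P (τ S) or P (τ S) → P (ε S)), then either the figures for (S, P) form a square of opposition, or the figures for (fun x => ¬ S x, P) form a square of opposition: SqOp (P (τ S)) (¬ P (ε S)) (P (ε S)) (¬ P (τ S)) ∨ SqOp (P (τ S')) (¬ P (ε S')) (P (ε S')) (¬ P (τ S')) where S' := fun x => ¬ S x. -/
import Mathlib

def SqOp (A E I O : Prop) : Prop :=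
  (A ↔ ¬O) ∧ (E ↔ ¬I) ∧ ¬(A ∧ E) ∧ (I ∨ O) ∧ (A → I) ∧ (E → O)

theorem stmt15 {α : Type*} [Nonempty α] (S P : α → Prop)
    (hbiv : (P (Classical.epsilon S) → P (Classical.epsilon (fun x => ¬ S x))) ∨
            (P (Classical.epsilon (fun x => ¬ S x)) → P (Classical.epsilon S))) :
    SqOp (P (Classical.epsilon (fun x => ¬ S x))) (¬ P (Classical.epsilon S))
      (P (Classical.epsilon S)) (¬ P (Classical.epsilon (fun x => ¬ S x))) ∨
    SqOp (P (Classical.epsilon (fun x => ¬ (¬ S x)))) (¬ P (Classical.epsilon (fun x => ¬ S x)))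
      (P (Classical.epsilon (fun x => ¬ S x))) (¬ P (Classical.epsilon (fun x => ¬ (¬ S x)))) := by
  have hS : (fun x => ¬ (¬ S x)) = S := funext fun x => propext not_not
  rw [hS]
  unfold SqOp
  rcases hbiv with h | h
  · right; tauto
  · left; tauto
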